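/- For n ≥ 1 let T_n : M_2^{⊗n} → M_2^{⊗n} be the random Pauli error channel T_n = (1/n)·Σ_{i=1}^n id^{⊗(i−1)} ⊗ T ⊗ id^{⊗(n−i)}, where T : M_2 → M_2 is the completely depolarizing channel T(ρ) = tr(ρ)·𝟙_2/2. Then for every state ρ on M_2^{⊗n}, D_2(T_n(ρ)‖𝟙_{2^n}/2^n) ≤ (1 − 1/(2n²))·D_2(ρ‖𝟙_{2^n}/2^n). -/

import Mathlib

open scoped BigOperators Matrix ComplexOrder

noncomputable section

namespace SRC

variable {ι : Type*} [Fintype ι] [DecidableEq ι]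

/-- Real power of a Hermitian matrix via the spectral decomposition
(junk value `0` on non-Hermitian input). -/
def mpow (A : Matrix ι ι ℂ) (c : ℝ) : Matrix ι ι ℂ :=
  if hA : A.IsHermitian then
    (hA.eigenvectorUnitary : Matrix ι ι ℂ) *
      Matrix.diagonal (fun i => ((hA.eigenvalues i ^ c : ℝ) : ℂ)) *
      star (hA.eigenvectorUnitary : Matrix ι ι ℂ)
  else 0

/-- Logarithm of a Hermitian matrix via the spectral decomposition. -/
def mlog (A : Matrix ι ι ℂ) : Matrix ι ι ℂ :=
  if hA : A.IsHermitian then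
    (hA.eigenvectorUnitary : Matrix ι ι ℂ) *
      Matrix.diagonal (fun i => ((Real.log (hA.eigenvalues i) : ℝ) : ℂ)) *
      star (hA.eigenvectorUnitary : Matrix ι ι ℂ)
  else 0

/-- Real part of the trace. -/
def rtr (A : Matrix ι ι ℂ) : ℝ := (Matrix.trace A).re

/-- Absolute value |A| = (AᴴA)^{1/2} of a matrix. -/
def mabs (A : Matrix ι ι ℂ) : Matrix ι ι ℂ := mpow (Aᴴ * A) (1/2)

/-- Trace norm. -/
def traceNorm (A : Matrix ι ι ℂ) : ℝ := rtr (mabs A)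

/-- Operator norm of a Hermitian matrix: the largest absolute value of an eigenvalue. -/
def opNorm (A : Matrix ι ι ℂ) : ℝ :=
  if hA : A.IsHermitian then ⨆ i, |hA.eigenvalues i| else 0

/-- Weighted noncommutative `p`-norm `‖X‖_{p,σ}`. -/
def wnorm (σ : Matrix ι ι ℂ) (p : ℝ) (X : Matrix ι ι ℂ) : ℝ :=
  (rtr (mpow (mabs (mpow σ (1/(2*p)) * X * mpow σ (1/(2*p)))) p)) ^ (1/p)

/-- Weighted inner product `⟨X,Y⟩_σ = tr[σ^{1/2} X σ^{1/2} Y]` (real part). -/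
def winner (σ X Y : Matrix ι ι ℂ) : ℝ := rtr (mpow σ (1/2) * X * mpow σ (1/2) * Y)

/-- Conjugation `X ↦ A X A` as a linear map. -/
def conjLin (A : Matrix ι ι ℂ) : Matrix ι ι ℂ →ₗ[ℂ] Matrix ι ι ℂ where
  toFun X := A * X * A
  map_add' X Y := by simp [Matrix.mul_add, Matrix.add_mul]
  map_smul' c X := by simp [Matrix.mul_smul, Matrix.smul_mul]

/-- `Φ̂ = Γ_σ^{-1} ∘ Φ ∘ Γ_σ` where `Γ_σ(X) = σ^{1/2} X σ^{1/2}`. -/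
def hatMap (σ : Matrix ι ι ℂ) (Φ : Matrix ι ι ℂ →ₗ[ℂ] Matrix ι ι ℂ) :
    Matrix ι ι ℂ →ₗ[ℂ] Matrix ι ι ℂ :=
  (conjLin (mpow σ (-(1/2)))).comp (Φ.comp (conjLin (mpow σ (1/2))))

/-- The power operator `I_{r,p}(X) = σ^{-1/(2r)} (σ^{1/(2p)} X σ^{1/(2p)})^{p/r} σ^{-1/(2r)}`. -/
def Ipow (σ : Matrix ι ι ℂ) (r p : ℝ) (X : Matrix ι ι ℂ) : Matrix ι ι ℂ :=
  mpow σ (-(1/(2*r))) * mpow (mpow σ (1/(2*p)) * X * mpow σ (1/(2*p))) (p/r) *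
    mpow σ (-(1/(2*r)))

/-- The `p`-Dirichlet form `E_p(X) = -(p/(2(p-1))) ⟨I_{q,p}(X), L̂(X)⟩_σ` with `1/p + 1/q = 1`. -/
def dirichlet (σ : Matrix ι ι ℂ) (L : Matrix ι ι ℂ →ₗ[ℂ] Matrix ι ι ℂ) (p : ℝ)
    (X : Matrix ι ι ℂ) : ℝ :=
  -(p/(2*(p-1))) * winner σ (Ipow σ (p/(p-1)) p X) (hatMap σ L X)

/-- The `2`-Dirichlet form `E_2(X) = -⟨X, L̂(X)⟩_σ`. -/
def dirichlet2 (σ : Matrix ι ι ℂ) (L : Matrix ι ι ℂ →ₗ[ℂ] Matrix ι ι ℂ)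
    (X : Matrix ι ι ℂ) : ℝ :=
  -winner σ X (hatMap σ L X)

/-- `κ_p(X) = (1/(p-1)) ‖X‖_{p,σ}^p log(‖X‖_{p,σ}^p / ‖X‖_{1,σ}^p)`. -/
def kappa (σ : Matrix ι ι ℂ) (p : ℝ) (X : Matrix ι ι ℂ) : ℝ :=
  (1/(p-1)) * (wnorm σ p X) ^ p * Real.log ((wnorm σ p X) ^ p / (wnorm σ 1 X) ^ p)

/-- `β_p(L)`. -/
def betaP (σ : Matrix ι ι ℂ) (L : Matrix ι ι ℂ →ₗ[ℂ] Matrix ι ι ℂ) (p : ℝ) : ℝ :=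
  sSup {β : ℝ | 0 ≤ β ∧ ∀ X : Matrix ι ι ℂ, X.PosDef → β * kappa σ p X ≤ dirichlet σ L p X}

/-- `β_2(L)` (defined with the `2`-Dirichlet form). -/
def beta2 (σ : Matrix ι ι ℂ) (L : Matrix ι ι ℂ →ₗ[ℂ] Matrix ι ι ℂ) : ℝ :=
  sSup {β : ℝ | 0 ≤ β ∧ ∀ X : Matrix ι ι ℂ, X.PosDef → β * kappa σ 2 X ≤ dirichlet2 σ L X}

/-- Variance `Var_σ(X) = ‖X‖_{2,σ}² - ‖X‖_{1,σ}²`. -/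
def Var (σ X : Matrix ι ι ℂ) : ℝ := (wnorm σ 2 X) ^ (2:ℝ) - (wnorm σ 1 X) ^ (2:ℝ)

/-- Spectral gap `λ(L)`. -/
def gap (σ : Matrix ι ι ℂ) (L : Matrix ι ι ℂ →ₗ[ℂ] Matrix ι ι ℂ) : ℝ :=
  sSup {lam : ℝ | 0 ≤ lam ∧ ∀ X : Matrix ι ι ℂ, X.PosDef → lam * Var σ X ≤ dirichlet2 σ L X}

/-- Operator-valued relative entropy `S_p(X) = -p (d/ds) I_{p+s,p}(X)|_{s=0}` (entrywise). -/
def Sp (σ : Matrix ι ι ℂ) (p : ℝ) (X : Matrix ι ι ℂ) : Matrix ι ι ℂ :=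
  Matrix.of fun i j => -(p : ℂ) * deriv (fun s : ℝ => Ipow σ (p + s) p X i j) 0

/-- `p`-relative entropy `Ent_{p,σ}(X)`. -/
def entP (σ : Matrix ι ι ℂ) (p : ℝ) (X : Matrix ι ι ℂ) : ℝ :=
  winner σ (Ipow σ (p/(p-1)) p X) (Sp σ p X) - (wnorm σ p X) ^ p * Real.log (wnorm σ p X)

/-- Logarithmic Sobolev constant `α_p(L)`. -/
def alphaP (σ : Matrix ι ι ℂ) (L : Matrix ι ι ℂ →ₗ[ℂ] Matrix ι ι ℂ) (p : ℝ) : ℝ :=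
  sSup {α : ℝ | 0 ≤ α ∧ ∀ X : Matrix ι ι ℂ, X.PosDef → α * entP σ p X ≤ dirichlet σ L p X}

/-- Explicit `2`-relative entropy. -/
def ent2 (σ X : Matrix ι ι ℂ) : ℝ :=
  rtr ((mpow σ (1/4) * X * mpow σ (1/4)) ^ 2 *
      mlog ((wnorm σ 2 X)⁻¹ • (mpow σ (1/4) * X * mpow σ (1/4)))) -
    (1/2) * rtr ((mpow σ (1/4) * X * mpow σ (1/4)) ^ 2 * mlog σ)

/-- Logarithmic Sobolev constant `α_2(L)`. -/
def alpha2 (σ : Matrix ι ι ℂ) (L : Matrix ι ι ℂ →ₗ[ℂ] Matrix ι ι ℂ) : ℝ :=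
  sSup {α : ℝ | 0 ≤ α ∧ ∀ X : Matrix ι ι ℂ, X.PosDef → α * ent2 σ X ≤ dirichlet2 σ L X}

/-- Sandwiched `p`-Rényi divergence. -/
def sandDiv (p : ℝ) (ρ σ : Matrix ι ι ℂ) : ℝ :=
  (1/(p-1)) * Real.log (rtr (mpow (mpow σ ((1-p)/(2*p)) * ρ * mpow σ ((1-p)/(2*p))) p))

/-- A quantum state. -/
def IsState (ρ : Matrix ι ι ℂ) : Prop := ρ.PosSemidef ∧ ρ.trace = 1

/-- Complete positivity. -/
def IsCP (Φ : Matrix ι ι ℂ →ₗ[ℂ] Matrix ι ι ℂ) : Prop :=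
  ∀ (n : ℕ) (M : Matrix (Fin n × ι) (Fin n × ι) ℂ), M.PosSemidef →
    (Matrix.of fun (r c : Fin n × ι) => Φ (Matrix.of fun a b => M (r.1, a) (c.1, b)) r.2 c.2).PosSemidef

/-- Trace preservation. -/
def IsTP (Φ : Matrix ι ι ℂ →ₗ[ℂ] Matrix ι ι ℂ) : Prop :=
  ∀ X : Matrix ι ι ℂ, (Φ X).trace = X.trace

/-- Quantum channel: completely positive and trace preserving. -/
def IsChannel (Φ : Matrix ι ι ℂ →ₗ[ℂ] Matrix ι ι ℂ) : Prop := IsCP Φ ∧ IsTP Φ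

/-- The semigroup `e^{tL}` generated by a linear map `L` on matrices. -/
def expMap (L : Matrix ι ι ℂ →ₗ[ℂ] Matrix ι ι ℂ) (t : ℝ) :
    Matrix ι ι ℂ →ₗ[ℂ] Matrix ι ι ℂ :=
  Matrix.toLin (Matrix.stdBasis ℂ ι ι) (Matrix.stdBasis ℂ ι ι)
    (NormedSpace.exp
      ((t : ℂ) • LinearMap.toMatrix (Matrix.stdBasis ℂ ι ι) (Matrix.stdBasis ℂ ι ι) L))

/-- Liouvillian: generator of a semigroup of quantum channels. -/
def IsLiouvillian (L : Matrix ι ι ℂ →ₗ[ℂ] Matrix ι ι ℂ) : Prop :=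
  ∀ t : ℝ, 0 ≤ t → IsChannel (expMap L t)

/-- Primitive Liouvillian with (unique, full-rank) fixed point `σ`. -/
def IsPrimitive (L : Matrix ι ι ℂ →ₗ[ℂ] Matrix ι ι ℂ) (σ : Matrix ι ι ℂ) : Prop :=
  IsLiouvillian L ∧ σ.PosDef ∧ σ.trace = 1 ∧ L σ = 0 ∧
    (∀ τ : Matrix ι ι ℂ, IsState τ → L τ = 0 → τ = σ) ∧
    ∀ ρ : Matrix ι ι ℂ, IsState ρ →
      Filter.Tendsto (fun t : ℝ => expMap L t ρ) Filter.atTop (nhds σ)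

/-- Reversibility (detailed balance): `L̂ = L*` w.r.t. the Hilbert–Schmidt inner product. -/
def IsReversible (σ : Matrix ι ι ℂ) (L : Matrix ι ι ℂ →ₗ[ℂ] Matrix ι ι ℂ) : Prop :=
  ∀ X Y : Matrix ι ι ℂ,
    Matrix.trace ((hatMap σ L X)ᴴ * Y) = Matrix.trace (Xᴴ * L Y)

/-- Primitive quantum channel with full-rank fixed point `σ`. -/
def IsPrimitiveChannel (T : Matrix ι ι ℂ →ₗ[ℂ] Matrix ι ι ℂ) (σ : Matrix ι ι ℂ) : Prop :=
  IsChannel T ∧ σ.PosDef ∧ σ.trace = 1 ∧ T σ = σ ∧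
    ∀ ρ : Matrix ι ι ℂ, IsState ρ →
      Filter.Tendsto (fun n : ℕ => (⇑T)^[n] ρ) Filter.atTop (nhds σ)

/-- The constant `β_D(T)` for a quantum channel. -/
def betaD (σ : Matrix ι ι ℂ) (T : Matrix ι ι ℂ →ₗ[ℂ] Matrix ι ι ℂ) : ℝ :=
  sSup {β : ℝ | 0 ≤ β ∧ ∀ X : Matrix ι ι ℂ, X.PosDef →
    β * kappa σ 2 X ≤ (wnorm σ 2 X) ^ (2:ℝ) - (wnorm σ 2 (hatMap σ T X)) ^ (2:ℝ)}

/-- Hilbert–Schmidt adjoint of a linear map on matrices. -/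
def hsAdjoint (T : Matrix ι ι ℂ →ₗ[ℂ] Matrix ι ι ℂ) : Matrix ι ι ℂ →ₗ[ℂ] Matrix ι ι ℂ where
  toFun X := Matrix.of fun i j => Matrix.trace ((T (Matrix.single i j 1))ᴴ * X)
  map_add' X Y := by
    ext i j
    simp [Matrix.mul_add, Matrix.trace_add]
  map_smul' c X := by
    ext i j
    simp [Matrix.mul_smul, Matrix.trace_smul]

/-- The depolarizing Liouvillian `ρ ↦ tr(ρ)·σ - ρ`. -/
def depol (σ : Matrix ι ι ℂ) : Matrix ι ι ℂ →ₗ[ℂ] Matrix ι ι ℂ where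
  toFun ρ := ρ.trace • σ - ρ
  map_add' ρ₁ ρ₂ := by
    simp [Matrix.trace_add, add_smul]
    abel
  map_smul' c ρ := by
    simp [Matrix.trace_smul, smul_smul, smul_sub]

/-- Action of a map on the `i`-th tensor factor: `id^{⊗(i-1)} ⊗ Φ ⊗ id^{⊗(n-i)}`. -/
def localApply {d : ℕ} (n : ℕ)
    (Φ : Matrix (Fin d) (Fin d) ℂ →ₗ[ℂ] Matrix (Fin d) (Fin d) ℂ) (i : Fin n) :
    Matrix (Fin n → Fin d) (Fin n → Fin d) ℂ →ₗ[ℂ] Matrix (Fin n → Fin d) (Fin n → Fin d) ℂ where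
  toFun M := Matrix.of fun x y =>
    Φ (Matrix.of fun a b => M (Function.update x i a) (Function.update y i b)) (x i) (y i)
  map_add' M N := by
    ext x y
    have h : (Matrix.of fun a b => (M + N) (Function.update x i a) (Function.update y i b)) =
        (Matrix.of fun a b => M (Function.update x i a) (Function.update y i b)) +
        (Matrix.of fun a b => N (Function.update x i a) (Function.update y i b)) := rfl
    show Φ (Matrix.of fun a b => (M + N) (Function.update x i a) (Function.update y i b))
        (x i) (y i) = _
    rw [h, map_add]
    rfl
  map_smul' c M := by
    ext x y
    have h : (Matrix.of fun a b => (c • M) (Function.update x i a) (Function.update y i b)) =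
        c • (Matrix.of fun a b => M (Function.update x i a) (Function.update y i b)) := rfl
    show Φ (Matrix.of fun a b => (c • M) (Function.update x i a) (Function.update y i b))
        (x i) (y i) = _
    rw [h, map_smul]
    rfl

/-- The tensor power `σ^{⊗n}` of a matrix. -/
def tensPow {d : ℕ} (σ : Matrix (Fin d) (Fin d) ℂ) (n : ℕ) :
    Matrix (Fin n → Fin d) (Fin n → Fin d) ℂ :=
  Matrix.of fun x y => ∏ i, σ (x i) (y i)


/-- The completely depolarizing qubit channel `T(ρ) = tr(ρ)·𝟙₂/2`. -/
def fullyDepolQubit : Matrix (Fin 2) (Fin 2) ℂ →ₗ[ℂ] Matrix (Fin 2) (Fin 2) ℂ where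
  toFun ρ := ρ.trace • ((2 : ℂ)⁻¹ • (1 : Matrix (Fin 2) (Fin 2) ℂ))
  map_add' ρ₁ ρ₂ := by simp [Matrix.trace_add, add_smul]
  map_smul' c ρ := by simp [Matrix.trace_smul, smul_smul, mul_assoc]

end SRC

/-!
For `σ = 𝟙/2ⁿ` one has `D₂(ρ‖σ) = log (2ⁿ tr ρ²)`, so the claim is a contraction estimate for the
purity. Expand `ρ` in the basis of Pauli strings `P_s = σ_{s₁} ⊗ ⋯ ⊗ σ_{sₙ}`: by Parseval,
`2ⁿ tr ρ² = ∑ₛ |tr(P_s ρ)|² =: D`. Each `id ⊗ T ⊗ id` fixes `P_s` or kills it, according to whether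
`P_s` carries the identity in that slot, so `T_n` multiplies the coefficient of `P_s` by `m_s / n`,
`m_s` being the number of identity factors. The coefficient of `P_0 = 𝟙` is `tr ρ = 1` and
`m_s ≤ n - 1` for every other `s`, whence `2ⁿ tr T_n(ρ)² ≤ 1 + ((n-1)/n)² (D - 1)`. Together with
`1 ≤ D ≤ 2ⁿ`, an elementary inequality for the logarithm gives the factor `1 - 1/(2n²)`.
-/

namespace SRC

open Matrix

section SpectralCalculus

variable {ι : Type*} [Fintype ι] [DecidableEq ι]

lemma mpow_eq_cfc {A : Matrix ι ι ℂ} (hA : A.IsHermitian) (c : ℝ) :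
    mpow A c = cfc (fun x : ℝ => x ^ c) A := by
  rw [mpow, dif_pos hA, hA.cfc_eq, IsHermitian.cfc, Unitary.conjStarAlgAut_apply]
  rfl

lemma mpow_algebraMap (a c : ℝ) :
    mpow (algebraMap ℝ (Matrix ι ι ℂ) a) c = algebraMap ℝ (Matrix ι ι ℂ) (a ^ c) := by
  rw [mpow_eq_cfc (cfc_predicate_algebraMap (p := IsSelfAdjoint) a), cfc_algebraMap]

lemma mpow_two {A : Matrix ι ι ℂ} (hA : A.IsHermitian) : mpow A 2 = A * A := by
  simp_rw [mpow_eq_cfc hA, Real.rpow_two]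
  rw [cfc_pow_id (R := ℝ) A 2 hA.isSelfAdjoint, sq]

lemma trace_mul_self_eq_sum_eigenvalues_sq {A : Matrix ι ι ℂ} (hA : A.IsHermitian) :
    (A * A).trace = ∑ i, ((hA.eigenvalues i ^ 2 : ℝ) : ℂ) := by
  rw [← sq, ← cfc_pow_id (R := ℝ) A 2 hA.isSelfAdjoint, hA.cfc_eq, IsHermitian.cfc,
    Unitary.conjStarAlgAut_apply, trace_mul_cycle, Unitary.coe_star_mul_self, one_mul,
    trace_diagonal]
  rfl

end SpectralCalculus

section Trace

variable {ι : Type*} [Fintype ι]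

lemma rtr_smul (r : ℝ) (A : Matrix ι ι ℂ) : rtr (r • A) = r * rtr A := by
  rw [rtr, rtr, trace_smul, Complex.smul_re, smul_eq_mul]

lemma rtr_mul_self_le_one {ρ : Matrix ι ι ℂ} (hρ : IsState ρ) : rtr (ρ * ρ) ≤ 1 := by
  classical
  have hH := hρ.1.isHermitian
  have hsum : ∑ i, hH.eigenvalues i = 1 := by
    have h := congrArg Complex.re hH.trace_eq_sum_eigenvalues
    simpa [hρ.2] using h.symm
  have hnonneg := hρ.1.eigenvalues_nonneg
  rw [rtr, trace_mul_self_eq_sum_eigenvalues_sq hH, ← Complex.ofReal_sum, Complex.ofReal_re,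
    ← hsum]
  refine Finset.sum_le_sum fun i _ => ?_
  have hle : hH.eigenvalues i ≤ 1 :=
    hsum ▸ Finset.single_le_sum (fun j _ => hnonneg j) (Finset.mem_univ i)
  nlinarith [hnonneg i]

end Trace

section SandwichedRenyi

variable {ι : Type*} [Fintype ι] [DecidableEq ι]

lemma sandDiv_two_smul_one {a : ℝ} (ha : 0 < a) {ρ : Matrix ι ι ℂ} (hρ : ρ.IsHermitian) :
    sandDiv 2 ρ ((a : ℂ) • (1 : Matrix ι ι ℂ)) = Real.log (a⁻¹ * rtr (ρ * ρ)) := by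
  set b : ℝ := a ^ (-(1/4) : ℝ)
  have hσ : (a : ℂ) • (1 : Matrix ι ι ℂ) = algebraMap ℝ (Matrix ι ι ℂ) a := by
    rw [Algebra.algebraMap_eq_smul_one, ← algebraMap_smul ℂ a]
    rfl
  have hsandwich : mpow ((a : ℂ) • (1 : Matrix ι ι ℂ)) ((1 - 2) / (2 * 2)) * ρ *
      mpow ((a : ℂ) • (1 : Matrix ι ι ℂ)) ((1 - 2) / (2 * 2)) = (b * b) • ρ := by
    rw [hσ, mpow_algebraMap, show ((1:ℝ) - 2) / (2 * 2) = -(1/4) by norm_num, ← Algebra.smul_def,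
      ← Algebra.commutes, ← Algebra.smul_def, smul_smul]
  have hb : (b * b) * (b * b) = a⁻¹ := by
    simp only [b, ← Real.rpow_add ha]
    norm_num [Real.rpow_neg_one]
  rw [sandDiv, hsandwich, mpow_two (hρ.smul (IsSelfAdjoint.all _)), smul_mul_smul, rtr_smul, hb]
  norm_num

end SandwichedRenyi

section RealInequalities

open Real

lemma sum_mul_le_add_mul_sum_sub {α : Type*} [Fintype α] [DecidableEq α] (a : α)
    {w μ : α → ℝ} {q : ℝ} (hw : ∀ s, 0 ≤ w s) (hμ : ∀ s ≠ a, μ s ≤ q) :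
    ∑ s, μ s * w s ≤ μ a * w a + q * (∑ s, w s - w a) := by
  rw [← Finset.add_sum_erase _ _ (Finset.mem_univ a),
    ← Finset.add_sum_erase _ w (Finset.mem_univ a), add_sub_cancel_left, Finset.mul_sum]
  gcongr with s hs
  · exact hw s
  · exact hμ s (Finset.ne_of_mem_erase hs)

lemma mul_log_le_of_log_le {N D : ℝ} (hN : 1 ≤ N) (hD : 1 ≤ D) (hDN : log D ≤ N) :
    D * log D ≤ 2 * (2 * N - 1) * (D - 1) := by
  -- for `D ≤ 2` use `log D ≤ D - 1`; for `D ≥ 2` use `log D ≤ N` and `D ≤ 2 (D - 1)`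
  have hlog := log_nonneg hD
  rcases le_total D 2 with hD2 | hD2
  · have := log_le_sub_one_of_pos (by linarith : 0 < D)
    nlinarith
  · nlinarith

lemma log_le_of_le_one_add_mul {N D E : ℝ} (hN : 1 ≤ N) (hD : 1 ≤ D) (hDN : log D ≤ N)
    (hE : 0 < E) (hED : E ≤ 1 + ((N - 1) / N) ^ 2 * (D - 1)) :
    log E ≤ (1 - 1 / (2 * N ^ 2)) * log D := by
  have hN0 : 0 < N := by linarith
  have hD0 : 0 < D := by linarith
  set c := ((N - 1) / N) ^ 2
  have hc : 1 - c = (2 * N - 1) / N ^ 2 := by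
    simp only [c]
    field_simp
    ring
  have hcD : 0 < 1 + c * (D - 1) := by positivity
  calc log E ≤ log (1 + c * (D - 1)) := log_le_log hE hED
    _ = log D + log ((1 + c * (D - 1)) / D) := by
      rw [log_div hcD.ne' hD0.ne']
      ring
    _ ≤ log D + ((1 + c * (D - 1)) / D - 1) := by
      gcongr
      exact log_le_sub_one_of_pos (by positivity)
    _ = log D - (1 - c) * (D - 1) / D := by
      field_simp
      ring
    _ ≤ log D - log D / (2 * N ^ 2) := by
      have := mul_log_le_of_log_le hN hD hDN
      rw [hc, div_mul_eq_mul_div, div_div, sub_le_sub_iff_left,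
        div_le_div_iff₀ (by positivity) (by positivity)]
      nlinarith
    _ = (1 - 1 / (2 * N ^ 2)) * log D := by ring

end RealInequalities

section PiTensor

variable {ι κ : Type*} [Fintype ι]

def piTensor (A : ι → Matrix κ κ ℂ) : Matrix (ι → κ) (ι → κ) ℂ :=
  Matrix.of fun x y => ∏ i, A i (x i) (y i)

lemma piTensor_one [DecidableEq κ] : piTensor (fun _ : ι => (1 : Matrix κ κ ℂ)) = 1 := by
  ext x y
  simp only [piTensor, of_apply, one_apply, Finset.prod_boole, Finset.mem_univ, true_implies,
    funext_iff]

variable [DecidableEq ι]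

lemma piTensor_update_zero (A : ι → Matrix κ κ ℂ) (i : ι) :
    piTensor (Function.update A i 0) = 0 := by
  ext x y
  exact Finset.prod_eq_zero (Finset.mem_univ i) (by simp)

lemma sum_star_piTensor_mul_piTensor [Fintype κ] {α : Type*} [Fintype α] (B : α → Matrix κ κ ℂ)
    (x y x' y' : ι → κ) :
    ∑ s : ι → α, star (piTensor (fun i => B (s i)) x y) * piTensor (fun i => B (s i)) x' y' =
      ∏ i, ∑ k, star (B k (x i) (y i)) * B k (x' i) (y' i) := by
  simp only [piTensor, of_apply, Fintype.prod_sum, star_prod, ← Finset.prod_mul_distrib]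

variable [Fintype κ]

lemma trace_conjTranspose_mul_piTensor (A B : ι → Matrix κ κ ℂ) :
    ((piTensor A)ᴴ * piTensor B).trace = ∏ i, ((A i)ᴴ * B i).trace := by
  simp only [trace, diag, mul_apply, conjTranspose_apply, piTensor, of_apply, Fintype.prod_sum,
    star_prod, ← Finset.prod_mul_distrib]

end PiTensor

section LocalApply

variable {n d : ℕ}

lemma localApply_piTensor (Φ : Matrix (Fin d) (Fin d) ℂ →ₗ[ℂ] Matrix (Fin d) (Fin d) ℂ)
    (i : Fin n) (A : Fin n → Matrix (Fin d) (Fin d) ℂ) :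
    localApply n Φ i (piTensor A) = piTensor (Function.update A i (Φ (A i))) := by
  ext x y
  set rest := ∏ j ∈ Finset.univ \ {i}, A j (x j) (y j)
  have hslice : (Matrix.of fun a b => piTensor A (Function.update x i a) (Function.update y i b)) =
      rest • A i := by
    ext a b
    simp only [piTensor, of_apply, Function.apply_update₂ A, Finset.prod_update_of_mem
      (Finset.mem_univ i), Matrix.smul_apply, smul_eq_mul, rest, mul_comm]
  change Φ (Matrix.of fun a b => piTensor A (Function.update x i a) (Function.update y i b))
    (x i) (y i) = _
  rw [hslice, map_smul]
  simp only [Matrix.smul_apply, smul_eq_mul, piTensor, of_apply,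
    Function.apply_update (fun j (M : Matrix (Fin d) (Fin d) ℂ) => M (x j) (y j)),
    Finset.prod_update_of_mem (Finset.mem_univ i), rest, mul_comm]

lemma localApply_conjTranspose {Φ : Matrix (Fin d) (Fin d) ℂ →ₗ[ℂ] Matrix (Fin d) (Fin d) ℂ}
    (hΦ : ∀ X, Φ Xᴴ = (Φ X)ᴴ) (i : Fin n) (M : Matrix (Fin n → Fin d) (Fin n → Fin d) ℂ) :
    localApply n Φ i Mᴴ = (localApply n Φ i M)ᴴ := by
  ext x y
  change Φ (Matrix.of fun a b => M (Function.update y i a) (Function.update x i b))ᴴ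
    (x i) (y i) = _
  rw [hΦ]
  rfl

end LocalApply

section Pauli

def pauli : Fin 4 → Matrix (Fin 2) (Fin 2) ℂ :=
  ![1, !![0, 1; 1, 0], !![0, -Complex.I; Complex.I, 0], !![1, 0; 0, -1]]

lemma trace_pauli (k : Fin 4) : (pauli k).trace = if k = 0 then 2 else 0 := by
  fin_cases k <;> simp [pauli, trace_fin_two]

lemma trace_conjTranspose_pauli_mul_pauli (k l : Fin 4) :
    ((pauli k)ᴴ * pauli l).trace = if k = l then 2 else 0 := by
  fin_cases k <;> fin_cases l <;> simp [pauli, trace_fin_two, mul_apply, Fin.sum_univ_two] <;>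
    norm_num

lemma sum_star_pauli_mul_pauli (a b a' b' : Fin 2) :
    ∑ k, star (pauli k a b) * pauli k a' b' = if a = a' ∧ b = b' then 2 else 0 := by
  fin_cases a <;> fin_cases b <;> fin_cases a' <;> fin_cases b' <;>
    simp [pauli, Fin.sum_univ_four] <;> norm_num

lemma fullyDepolQubit_pauli (k : Fin 4) :
    fullyDepolQubit (pauli k) = if k = 0 then pauli k else 0 := by
  change (pauli k).trace • ((2 : ℂ)⁻¹ • (1 : Matrix (Fin 2) (Fin 2) ℂ)) = _
  rw [trace_pauli]
  split_ifs with hk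
  · rw [hk, smul_smul, mul_inv_cancel₀ two_ne_zero, one_smul]
    rfl
  · rw [zero_smul]

lemma fullyDepolQubit_conjTranspose (X : Matrix (Fin 2) (Fin 2) ℂ) :
    fullyDepolQubit Xᴴ = (fullyDepolQubit X)ᴴ := by
  change Xᴴ.trace • ((2 : ℂ)⁻¹ • (1 : Matrix (Fin 2) (Fin 2) ℂ)) =
    (X.trace • ((2 : ℂ)⁻¹ • (1 : Matrix (Fin 2) (Fin 2) ℂ)))ᴴ
  simp [trace_conjTranspose, conjTranspose_smul]

end Pauli

section PauliString

variable {n : ℕ}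

def pauliString (s : Fin n → Fin 4) : Matrix (Fin n → Fin 2) (Fin n → Fin 2) ℂ :=
  piTensor fun i => pauli (s i)

def pauliCoeff (s : Fin n → Fin 4) : Matrix (Fin n → Fin 2) (Fin n → Fin 2) ℂ →ₗ[ℂ] ℂ :=
  (traceLinearMap _ ℂ ℂ).comp (LinearMap.mulLeft ℂ (pauliString s)ᴴ)

lemma pauliCoeff_apply (s : Fin n → Fin 4) (M : Matrix (Fin n → Fin 2) (Fin n → Fin 2) ℂ) :
    pauliCoeff s M = ((pauliString s)ᴴ * M).trace :=
  rfl

lemma pauliCoeff_pauliString (s t : Fin n → Fin 4) :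
    pauliCoeff s (pauliString t) = if s = t then 2 ^ n else 0 := by
  simp only [pauliCoeff_apply, pauliString, trace_conjTranspose_mul_piTensor,
    trace_conjTranspose_pauli_mul_pauli, Fintype.prod_ite_zero, Finset.prod_const,
    Finset.card_univ, Fintype.card_fin, ← funext_iff]

lemma sum_star_pauliString_mul_pauliString (x y x' y' : Fin n → Fin 2) :
    ∑ s, star (pauliString s x y) * pauliString s x' y' = if x = x' ∧ y = y' then 2 ^ n else 0 := by
  simp only [pauliString, sum_star_piTensor_mul_piTensor, sum_star_pauli_mul_pauli,
    Fintype.prod_ite_zero, Finset.prod_const, Finset.card_univ, Fintype.card_fin, forall_and,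
    ← funext_iff]

lemma sum_pauliCoeff_smul_pauliString (M : Matrix (Fin n → Fin 2) (Fin n → Fin 2) ℂ) :
    ∑ s, pauliCoeff s M • pauliString s = (2 ^ n : ℂ) • M := by
  ext x y
  calc (∑ s, pauliCoeff s M • pauliString s) x y
      = ∑ a, ∑ b, M b a * ∑ s, star (pauliString s b a) * pauliString s x y := by
        simp only [Matrix.sum_apply, Matrix.smul_apply, smul_eq_mul, pauliCoeff_apply, trace, diag,
          mul_apply, conjTranspose_apply, Finset.sum_mul, Finset.mul_sum]
        rw [Finset.sum_comm]
        refine Finset.sum_congr rfl fun a _ => ?_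
        rw [Finset.sum_comm]
        refine Finset.sum_congr rfl fun b _ => Finset.sum_congr rfl fun s _ => ?_
        ring
    _ = ((2 ^ n : ℂ) • M) x y := by
        simp_rw [sum_star_pauliString_mul_pauliString, mul_ite, mul_zero, ite_and]
        simp [Finset.sum_ite_eq', mul_comm]

lemma pauliCoeff_zero (M : Matrix (Fin n → Fin 2) (Fin n → Fin 2) ℂ) :
    pauliCoeff 0 M = M.trace := by
  rw [pauliCoeff_apply, pauliString]
  simp [pauli, piTensor_one]

lemma pauliCoeff_map_of_eigen
    {Φ : Matrix (Fin n → Fin 2) (Fin n → Fin 2) ℂ →ₗ[ℂ] Matrix (Fin n → Fin 2) (Fin n → Fin 2) ℂ}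
    {μ : (Fin n → Fin 4) → ℂ} (hΦ : ∀ t, Φ (pauliString t) = μ t • pauliString t)
    (s : Fin n → Fin 4) (M : Matrix (Fin n → Fin 2) (Fin n → Fin 2) ℂ) :
    pauliCoeff s (Φ M) = μ s * pauliCoeff s M := by
  have h := congrArg (fun X => pauliCoeff s (Φ X)) (sum_pauliCoeff_smul_pauliString M)
  simp only [map_sum, map_smul, hΦ, pauliCoeff_pauliString, smul_eq_mul, mul_ite, mul_zero,
    Finset.sum_ite_eq, Finset.mem_univ, if_true] at h
  apply mul_left_cancel₀ (pow_ne_zero n (two_ne_zero : (2 : ℂ) ≠ 0))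
  linear_combination -h

lemma sum_normSq_pauliCoeff (M : Matrix (Fin n → Fin 2) (Fin n → Fin 2) ℂ) :
    ∑ s, Complex.normSq (pauliCoeff s M) = 2 ^ n * rtr (Mᴴ * M) := by
  have h : ∑ s, (Complex.normSq (pauliCoeff s M) : ℂ) = (2 ^ n : ℂ) * (Mᴴ * M).trace :=
    calc ∑ s, (Complex.normSq (pauliCoeff s M) : ℂ)
        = ∑ s, pauliCoeff s M * (Mᴴ * pauliString s).trace := by
          refine Finset.sum_congr rfl fun s _ => ?_
          rw [← Complex.mul_conj, pauliCoeff_apply, ← Complex.star_def, ← trace_conjTranspose,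
            conjTranspose_mul, conjTranspose_conjTranspose]
      _ = (Mᴴ * ∑ s, pauliCoeff s M • pauliString s).trace := by
          simp only [Matrix.mul_sum, trace_sum, mul_smul_comm, trace_smul, smul_eq_mul]
      _ = (2 ^ n : ℂ) * (Mᴴ * M).trace := by
          rw [sum_pauliCoeff_smul_pauliString, mul_smul_comm, trace_smul, smul_eq_mul]
  have hre := congrArg Complex.re h
  rw [← Complex.ofReal_sum, Complex.ofReal_re] at hre
  rw [hre, rtr, show (2 ^ n : ℂ) = ((2 ^ n : ℝ) : ℂ) by push_cast; rfl, Complex.re_ofReal_mul]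

lemma one_le_two_pow_mul_rtr_mul_self {M : Matrix (Fin n → Fin 2) (Fin n → Fin 2) ℂ}
    (hM : M.IsHermitian) (htr : M.trace = 1) : 1 ≤ 2 ^ n * rtr (M * M) := by
  have h := sum_normSq_pauliCoeff M
  rw [hM.eq] at h
  calc (1 : ℝ) = Complex.normSq (pauliCoeff 0 M) := by rw [pauliCoeff_zero, htr, map_one]
    _ ≤ ∑ s, Complex.normSq (pauliCoeff s M) :=
        Finset.single_le_sum (f := fun s => Complex.normSq (pauliCoeff s M))
          (fun s _ => Complex.normSq_nonneg _) (Finset.mem_univ 0)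
    _ = 2 ^ n * rtr (M * M) := h

end PauliString

section RandomPauliChannel

def randomPauliChannel (n : ℕ) :
    Matrix (Fin n → Fin 2) (Fin n → Fin 2) ℂ →ₗ[ℂ] Matrix (Fin n → Fin 2) (Fin n → Fin 2) ℂ :=
  ((n : ℂ))⁻¹ • ∑ i : Fin n, localApply n fullyDepolQubit i

variable {n : ℕ}

def identityCount (s : Fin n → Fin 4) : ℕ :=
  (Finset.univ.filter fun i => s i = 0).card

lemma identityCount_zero : identityCount (0 : Fin n → Fin 4) = n := by
  simp [identityCount]

lemma identityCount_lt {s : Fin n → Fin 4} (hs : s ≠ 0) : identityCount s < n := by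
  obtain ⟨i, hi⟩ := Function.ne_iff.mp hs
  calc identityCount s < (Finset.univ : Finset (Fin n)).card :=
        Finset.card_lt_card (Finset.filter_ssubset.mpr ⟨i, Finset.mem_univ i, hi⟩)
    _ = n := Finset.card_fin n

lemma localApply_fullyDepolQubit_pauliString (i : Fin n) (s : Fin n → Fin 4) :
    localApply n fullyDepolQubit i (pauliString s) = if s i = 0 then pauliString s else 0 := by
  rw [pauliString, localApply_piTensor, fullyDepolQubit_pauli]
  split_ifs
  · rw [Function.update_eq_self]
  · exact piTensor_update_zero _ i

lemma randomPauliChannel_pauliString (s : Fin n → Fin 4) :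
    randomPauliChannel n (pauliString s) = ((identityCount s : ℂ) / n) • pauliString s := by
  simp only [randomPauliChannel, LinearMap.smul_apply, LinearMap.sum_apply,
    localApply_fullyDepolQubit_pauliString, Finset.sum_ite, Finset.sum_const_zero, add_zero,
    Finset.sum_const, identityCount, smul_smul, ← Nat.cast_smul_eq_nsmul ℂ, div_eq_inv_mul]

lemma randomPauliChannel_conjTranspose (M : Matrix (Fin n → Fin 2) (Fin n → Fin 2) ℂ) :
    randomPauliChannel n Mᴴ = (randomPauliChannel n M)ᴴ := by
  simp [randomPauliChannel, localApply_conjTranspose fullyDepolQubit_conjTranspose,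
    conjTranspose_smul, conjTranspose_sum]

lemma randomPauliChannel_isHermitian {M : Matrix (Fin n → Fin 2) (Fin n → Fin 2) ℂ}
    (hM : M.IsHermitian) : (randomPauliChannel n M).IsHermitian := by
  rw [IsHermitian, ← randomPauliChannel_conjTranspose, hM.eq]

lemma trace_randomPauliChannel (hn : n ≠ 0) (M : Matrix (Fin n → Fin 2) (Fin n → Fin 2) ℂ) :
    (randomPauliChannel n M).trace = M.trace := by
  rw [← pauliCoeff_zero, ← pauliCoeff_zero, pauliCoeff_map_of_eigen randomPauliChannel_pauliString,
    identityCount_zero, div_self (Nat.cast_ne_zero.mpr hn), one_mul]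

lemma two_pow_mul_rtr_randomPauliChannel_le (hn : n ≠ 0)
    {M : Matrix (Fin n → Fin 2) (Fin n → Fin 2) ℂ} (hM : M.IsHermitian) (htr : M.trace = 1) :
    2 ^ n * rtr (randomPauliChannel n M * randomPauliChannel n M) ≤
      1 + (((n : ℝ) - 1) / n) ^ 2 * (2 ^ n * rtr (M * M) - 1) := by
  have hD := sum_normSq_pauliCoeff M
  have hE := sum_normSq_pauliCoeff (randomPauliChannel n M)
  rw [hM.eq] at hD
  rw [(randomPauliChannel_isHermitian hM).eq] at hE
  rw [← hD, ← hE]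
  simp only [pauliCoeff_map_of_eigen randomPauliChannel_pauliString, Complex.normSq_mul,
    Complex.normSq_div, Complex.normSq_natCast]
  have hw0 : Complex.normSq (pauliCoeff 0 M) = 1 := by rw [pauliCoeff_zero, htr, map_one]
  refine (sum_mul_le_add_mul_sum_sub 0 (q := (((n : ℝ) - 1) / n) ^ 2)
    (fun s => Complex.normSq_nonneg _) (fun s hs => ?_)).trans ?_
  · have hk : (identityCount s : ℝ) ≤ n - 1 := by
      have := identityCount_lt hs
      rw [le_sub_iff_add_le]
      exact_mod_cast this
    rw [div_pow, ← sq, ← sq]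
    gcongr
  · have hn' : (n : ℝ) ≠ 0 := Nat.cast_ne_zero.mpr hn
    rw [identityCount_zero, hw0, div_self (mul_ne_zero hn' hn'), one_mul]

end RandomPauliChannel

/-- Entropy production of the uniform random Pauli error channel on
`n` qubits. -/
theorem statement_18 (n : ℕ) (hn : 1 ≤ n)
    (ρ : Matrix (Fin n → Fin 2) (Fin n → Fin 2) ℂ) (hρ : IsState ρ) :
    sandDiv 2 ((((n : ℂ))⁻¹ • ∑ i : Fin n, localApply n fullyDepolQubit i) ρ)
        (((2 ^ n : ℂ))⁻¹ • (1 : Matrix (Fin n → Fin 2) (Fin n → Fin 2) ℂ)) ≤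
      (1 - 1/(2 * (n : ℝ) ^ 2)) *
        sandDiv 2 ρ (((2 ^ n : ℂ))⁻¹ • (1 : Matrix (Fin n → Fin 2) (Fin n → Fin 2) ℂ)) := by
  have hn0 : n ≠ 0 := by omega
  have hρH : ρ.IsHermitian := hρ.1.isHermitian
  have hTρH := randomPauliChannel_isHermitian (n := n) hρH
  have hσ : ((2 ^ n : ℂ))⁻¹ = ((((2 : ℝ) ^ n)⁻¹ : ℝ) : ℂ) := by push_cast; rfl
  change sandDiv 2 (randomPauliChannel n ρ) _ ≤ _
  rw [hσ, sandDiv_two_smul_one (by positivity) hTρH, sandDiv_two_smul_one (by positivity) hρH,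
    inv_inv]
  have hD := one_le_two_pow_mul_rtr_mul_self hρH hρ.2
  have hE := one_le_two_pow_mul_rtr_mul_self hTρH ((trace_randomPauliChannel hn0 ρ).trans hρ.2)
  refine log_le_of_le_one_add_mul (by exact_mod_cast hn) hD ?_ (by linarith)
    (two_pow_mul_rtr_randomPauliChannel_le hn0 hρH hρ.2)
  calc Real.log (2 ^ n * rtr (ρ * ρ)) ≤ Real.log (2 ^ n) :=
        Real.log_le_log (by linarith)
          (mul_le_of_le_one_right (by positivity) (rtr_mul_self_le_one hρ))
    _ = n * Real.log 2 := by rw [Real.log_pow]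
    _ ≤ n := mul_le_of_le_one_right (Nat.cast_nonneg n)
        (by linarith [Real.log_le_sub_one_of_pos (by norm_num : (0 : ℝ) < 2)])

end SRC
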